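/- arXiv:1101.1002 — 3 statements merged into one kernel-verified Lean document; each statement's English description precedes it below -/
import Mathlib

section
/- Let P be a finite-rank orthogonal projection, V a bounded self-adjoint operator, and F_ε := (1−P) R_ε² (1−P) with R_ε as above. If the Fermi golden rule holds, i.e. lim_{ε→0⁺} ε P V (1−P) R_ε² (1−P) V P ≥ c₀ P for some c₀ > 0, then there exist ε₀ > 0 and constants c₁ ≥ c₂ > 0 such that (c₁/ε) P ≥ P V F_ε V P ≥ (c₂/ε) P for all 0 < ε < ε₀. -/
open scoped InnerProductSpace Topology

/-- `R_ε := ((H₀ − k)² + ε²)^{-1/2}`, defined by the functional calculus. -/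
noncomputable def Rop {𝓗 : Type*} [NormedAddCommGroup 𝓗] [InnerProductSpace ℂ 𝓗]
    [CompleteSpace 𝓗] (H₀ : 𝓗 →L[ℂ] 𝓗) (k ε : ℝ) : 𝓗 →L[ℂ] 𝓗 :=
  cfc (fun x : ℝ => ((x - k) ^ 2 + ε ^ 2) ^ (-(1 / 2) : ℝ)) H₀

/-- `F_ε := (1 − P) R_ε² (1 − P)`. -/
noncomputable def Fop {𝓗 : Type*} [NormedAddCommGroup 𝓗] [InnerProductSpace ℂ 𝓗]
    [CompleteSpace 𝓗] (H₀ P : 𝓗 →L[ℂ] 𝓗) (k ε : ℝ) : 𝓗 →L[ℂ] 𝓗 :=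
  (1 - P) * (Rop H₀ k ε * Rop H₀ k ε) * (1 - P)

/-!
Since `P V F_ε V P = P (V F_ε V) P`, its quadratic form at `u` only sees `P u`. The Fermi golden
rule says that `ε P V F_ε V P` converges in norm to some `G ≥ c₀ P`; once it is within `c₀ / 2`
of `G`, its form on the range of `P` lies between `c₀ / 2` and `‖G‖ + c₀ / 2`, and dividing
by `ε` gives both bounds.
-/

section QuadraticForm

variable {𝓗 : Type*} [NormedAddCommGroup 𝓗] [InnerProductSpace ℂ 𝓗]

theorem abs_re_inner_apply_self_le (A : 𝓗 →L[ℂ] 𝓗) (x : 𝓗) :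
    |(⟪x, A x⟫_ℂ).re| ≤ ‖A‖ * ‖x‖ ^ 2 :=
  calc |(⟪x, A x⟫_ℂ).re| ≤ ‖x‖ * ‖A x‖ :=
        (Complex.abs_re_le_norm _).trans (norm_inner_le_norm _ _)
    _ ≤ ‖x‖ * (‖A‖ * ‖x‖) := by gcongr; exact A.le_opNorm x
    _ = ‖A‖ * ‖x‖ ^ 2 := by ring

theorem re_inner_apply_self_le_of_norm_sub_le {A G : 𝓗 →L[ℂ] 𝓗} {δ : ℝ} (hAG : ‖A - G‖ ≤ δ)
    (x : 𝓗) : (⟪x, A x⟫_ℂ).re ≤ (‖G‖ + δ) * ‖x‖ ^ 2 :=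
  calc (⟪x, A x⟫_ℂ).re ≤ ‖A‖ * ‖x‖ ^ 2 := (abs_le.mp (abs_re_inner_apply_self_le A x)).2
    _ ≤ (‖G‖ + δ) * ‖x‖ ^ 2 := by
        gcongr
        calc ‖A‖ = ‖G + (A - G)‖ := by rw [add_sub_cancel]
          _ ≤ ‖G‖ + δ := (norm_add_le _ _).trans (by gcongr)

theorem le_re_inner_apply_self_of_norm_sub_le {A G : 𝓗 →L[ℂ] 𝓗} {x : 𝓗} {c δ : ℝ}
    (hG : c * ‖x‖ ^ 2 ≤ (⟪x, G x⟫_ℂ).re) (hAG : ‖A - G‖ ≤ δ) :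
    (c - δ) * ‖x‖ ^ 2 ≤ (⟪x, A x⟫_ℂ).re := by
  have hsplit : (⟪x, A x⟫_ℂ).re = (⟪x, G x⟫_ℂ).re + (⟪x, (A - G) x⟫_ℂ).re := by
    rw [sub_apply, inner_sub_right, Complex.sub_re, add_sub_cancel]
  have hdiff : -(δ * ‖x‖ ^ 2) ≤ (⟪x, (A - G) x⟫_ℂ).re :=
    (abs_le.mp ((abs_re_inner_apply_self_le (A - G) x).trans (by gcongr))).1
  linarith

variable [CompleteSpace 𝓗]

theorem IsStarProjection.inner_mul_mul_apply_self {P : 𝓗 →L[ℂ] 𝓗} (hP : IsStarProjection P)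
    (A : 𝓗 →L[ℂ] 𝓗) (u : 𝓗) :
    ⟪u, (P * A * P) u⟫_ℂ = ⟪P u, (P * A * P) (P u)⟫_ℂ := by
  have hPP : P (P u) = P u := DFunLike.congr_fun hP.isIdempotentElem.eq u
  have hsym : ∀ x y : 𝓗, ⟪P x, y⟫_ℂ = ⟪x, P y⟫_ℂ := hP.isSelfAdjoint.isSymmetric
  simp only [mul_apply_eq_comp, hPP]
  rw [← hsym u, ← hsym (P u), hPP]

theorem IsStarProjection.re_inner_mul_mul_apply_self_bounds {P S G : 𝓗 →L[ℂ] 𝓗}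
    (hP : IsStarProjection P) {c δ ε : ℝ} (hε : 0 < ε)
    (hG : ∀ u : 𝓗, c * ‖P u‖ ^ 2 ≤ (⟪u, G u⟫_ℂ).re)
    (hclose : ‖(ε : ℂ) • (P * S * P) - G‖ ≤ δ) (u : 𝓗) :
    ((c - δ) / ε) * ‖P u‖ ^ 2 ≤ (⟪u, (P * S * P) u⟫_ℂ).re ∧
      (⟪u, (P * S * P) u⟫_ℂ).re ≤ ((‖G‖ + δ) / ε) * ‖P u‖ ^ 2 := by
  have hPP : P (P u) = P u := DFunLike.congr_fun hP.isIdempotentElem.eq u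
  have hscale : (⟪P u, ((ε : ℂ) • (P * S * P)) (P u)⟫_ℂ).re
      = ε * (⟪u, (P * S * P) u⟫_ℂ).re := by
    rw [smul_apply, inner_smul_right, Complex.re_ofReal_mul, ← hP.inner_mul_mul_apply_self]
  have hlower := le_re_inner_apply_self_of_norm_sub_le (x := P u)
    (by simpa only [hPP] using hG (P u)) hclose
  have hupper := re_inner_apply_self_le_of_norm_sub_le hclose (P u)
  rw [hscale] at hlower hupper
  rw [div_mul_eq_mul_div, div_mul_eq_mul_div, div_le_iff₀ hε, le_div_iff₀ hε]
  constructor <;> linarith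

end QuadraticForm

theorem fermi_golden_rule_bounds_general {𝓗 : Type*} [NormedAddCommGroup 𝓗]
    [InnerProductSpace ℂ 𝓗] [CompleteSpace 𝓗]
    (H₀ V P : 𝓗 →L[ℂ] 𝓗)
    (hPsa : IsSelfAdjoint P) (hPidem : P * P = P)
    (k : ℝ)
    (c₀ : ℝ) (hc₀ : 0 < c₀) (G : 𝓗 →L[ℂ] 𝓗)
    (hlim : Filter.Tendsto (fun ε : ℝ => (ε : ℂ) • (P * V * Fop H₀ P k ε * V * P))
      (𝓝[>] (0 : ℝ)) (𝓝 G))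
    (hG : ∀ u : 𝓗, c₀ * ‖P u‖ ^ 2 ≤ (⟪u, G u⟫_ℂ).re) :
    ∃ ε₀ > (0 : ℝ), ∃ c₁ c₂ : ℝ, c₂ ≤ c₁ ∧ 0 < c₂ ∧
      ∀ ε : ℝ, 0 < ε → ε < ε₀ →
        (∀ u : 𝓗, (⟪u, (P * V * Fop H₀ P k ε * V * P) u⟫_ℂ).re ≤ (c₁ / ε) * ‖P u‖ ^ 2) ∧
        (∀ u : 𝓗, (c₂ / ε) * ‖P u‖ ^ 2 ≤ (⟪u, (P * V * Fop H₀ P k ε * V * P) u⟫_ℂ).re) := by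
  have hP : IsStarProjection P := ⟨hPidem, hPsa⟩
  obtain ⟨ε₀, hε₀, hclose⟩ := Metric.tendsto_nhdsWithin_nhds.mp hlim (c₀ / 2) (half_pos hc₀)
  refine ⟨ε₀, hε₀, ‖G‖ + c₀ / 2, c₀ / 2, by linarith [norm_nonneg G], half_pos hc₀,
    fun ε hε hεlt => ?_⟩
  have hnear : ‖(ε : ℂ) • (P * V * Fop H₀ P k ε * V * P) - G‖ ≤ c₀ / 2 := by
    rw [← dist_eq_norm]
    exact (hclose (Set.mem_Ioi.mpr hε) (by rwa [Real.dist_0_eq_abs, abs_of_pos hε])).le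
  have hcompress : P * V * Fop H₀ P k ε * V * P = P * (V * Fop H₀ P k ε * V) * P := by
    simp only [mul_assoc]
  rw [hcompress] at hnear ⊢
  have hbounds := hP.re_inner_mul_mul_apply_self_bounds hε hG hnear
  exact ⟨fun u => (hbounds u).2, fun u => by simpa only [sub_half] using (hbounds u).1⟩

/-- Under the Fermi golden rule `lim_{ε→0⁺} ε P V F_ε V P ≥ c₀ P`, one has two-sided
bounds `(c₁/ε) P ≥ P V F_ε V P ≥ (c₂/ε) P` for small `ε > 0`. -/
theorem fermi_golden_rule_bounds {𝓗 : Type*} [NormedAddCommGroup 𝓗]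
    [InnerProductSpace ℂ 𝓗] [CompleteSpace 𝓗]
    (H₀ V P : 𝓗 →L[ℂ] 𝓗) (hH₀ : IsSelfAdjoint H₀) (hV : IsSelfAdjoint V)
    (hPsa : IsSelfAdjoint P) (hPidem : P * P = P)
    (hPfin : FiniteDimensional ℂ (LinearMap.range (P : 𝓗 →ₗ[ℂ] 𝓗)))
    (k : ℝ) (heig : H₀ * P = (k : ℂ) • P)
    (c₀ : ℝ) (hc₀ : 0 < c₀) (G : 𝓗 →L[ℂ] 𝓗)
    (hlim : Filter.Tendsto (fun ε : ℝ => (ε : ℂ) • (P * V * Fop H₀ P k ε * V * P))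
      (𝓝[>] (0 : ℝ)) (𝓝 G))
    (hG : ∀ u : 𝓗, c₀ * ‖P u‖ ^ 2 ≤ (⟪u, G u⟫_ℂ).re) :
    ∃ ε₀ > (0 : ℝ), ∃ c₁ c₂ : ℝ, c₂ ≤ c₁ ∧ 0 < c₂ ∧
      ∀ ε : ℝ, 0 < ε → ε < ε₀ →
        (∀ u : 𝓗, (⟪u, (P * V * Fop H₀ P k ε * V * P) u⟫_ℂ).re ≤ (c₁ / ε) * ‖P u‖ ^ 2) ∧
        (∀ u : 𝓗, (c₂ / ε) * ‖P u‖ ^ 2 ≤ (⟪u, (P * V * Fop H₀ P k ε * V * P) u⟫_ℂ).re) :=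
  fermi_golden_rule_bounds_general H₀ V P hPsa hPidem k c₀ hc₀ G hlim hG
end

section
/- Let H₀ be self-adjoint with eigenvalue k, eigenprojection P, V bounded self-adjoint, H_λ := H₀ + λV, F_ε := (1−P)R_ε²(1−P), B_ε := Im(F_ε V P). Then P [H_λ, iλB_ε] P = λ² P V F_ε V P. Consequently, under the Fermi golden rule bound P V F_ε V P ≥ (c₂/ε) P, one has P[H_λ, iλB_ε]P ≥ (c₂ λ²/ε) P. -/
open scoped InnerProductSpace

/-- `B_ε := Im(F_ε V P)` with `Im T := (T − T*)/(2i)`. -/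
noncomputable def Bop {𝓗 : Type*} [NormedAddCommGroup 𝓗] [InnerProductSpace ℂ 𝓗]
    [CompleteSpace 𝓗] (H₀ V P : 𝓗 →L[ℂ] 𝓗) (k ε : ℝ) : 𝓗 →L[ℂ] 𝓗 :=
  (2 * Complex.I)⁻¹ •
    (Fop H₀ P k ε * V * P - ContinuousLinearMap.adjoint (Fop H₀ P k ε * V * P))

/-! Because `F_ε = (1 − P) R_ε² (1 − P)` is annihilated by `P` on both sides and `H_λ` acts
on `Ran P` as `k + λV`, compressing `[H_λ, B_ε]` by `P` leaves only the two cross terms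
`λ P V F_ε V P / (2i)`; multiplying by `iλ` gives `λ² P V F_ε V P`. The lower bound is then the
Fermi golden rule bound scaled by `λ² ≥ 0`. -/

section Compression

variable {A : Type*} [Ring A] [Algebra ℂ A] {P F V H : A}

theorem compress_smul_commutator (hP : IsIdempotentElem P) (hPF : P * F = 0) (hFP : F * P = 0)
    (c : ℂ) :
    P * (H * (c • (F * V * P - P * V * F)) - c • (F * V * P - P * V * F) * H) * P =
      c • (P * H * F * V * P + P * V * (F * H * P)) := by
  calc _ = c • (P * H * F * V * (P * P) - P * H * P * V * (F * P) - (P * F) * V * P * H * P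
          + (P * P) * V * (F * H * P)) := by
        simp only [mul_smul_comm, smul_mul_assoc, ← smul_sub]
        noncomm_ring
    _ = _ := by rw [hP.eq, hFP, hPF]; noncomm_ring

theorem mul_perturbation_mul_eq (hPF : P * F = 0) (hFP : F * P = 0) {H₀ : A} {k l : ℂ}
    (hHP : H₀ * P = k • P) (hPH : P * H₀ = k • P) (hH : H = H₀ + l • V) :
    P * H * F = l • (P * V * F) ∧ F * H * P = l • (F * V * P) := by
  subst hH
  constructor
  · rw [mul_add, add_mul, hPH, smul_mul_assoc, hPF, smul_zero, zero_add, mul_smul_comm,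
      smul_mul_assoc]
  · rw [mul_add, add_mul, mul_assoc, hHP, mul_smul_comm, hFP, smul_zero, zero_add,
      mul_smul_comm, smul_mul_assoc, mul_assoc]

end Compression

section Operators

variable {𝓗 : Type*} [NormedAddCommGroup 𝓗] [InnerProductSpace ℂ 𝓗] [CompleteSpace 𝓗]

theorem isSelfAdjoint_Rop (H₀ : 𝓗 →L[ℂ] 𝓗) (k ε : ℝ) : IsSelfAdjoint (Rop H₀ k ε) :=
  cfc_predicate _ _

theorem isSelfAdjoint_Fop {H₀ P : 𝓗 →L[ℂ] 𝓗} (hP : IsSelfAdjoint P) (k ε : ℝ) :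
    IsSelfAdjoint (Fop H₀ P k ε) := by
  have hR := isSelfAdjoint_Rop H₀ k ε
  have h1P : IsSelfAdjoint (1 - P) := (IsSelfAdjoint.one _).sub hP
  simp only [Fop, IsSelfAdjoint, star_mul, h1P.star_eq, hR.star_eq, mul_assoc]

theorem mul_Fop_eq_zero (H₀ : 𝓗 →L[ℂ] 𝓗) {P : 𝓗 →L[ℂ] 𝓗} (hP : IsIdempotentElem P)
    (k ε : ℝ) : P * Fop H₀ P k ε = 0 := by
  rw [Fop, ← mul_assoc, ← mul_assoc, hP.mul_one_sub_self, zero_mul, zero_mul]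

theorem Fop_mul_eq_zero (H₀ : 𝓗 →L[ℂ] 𝓗) {P : 𝓗 →L[ℂ] 𝓗} (hP : IsIdempotentElem P)
    (k ε : ℝ) : Fop H₀ P k ε * P = 0 := by
  rw [Fop, mul_assoc, hP.one_sub_mul_self, mul_zero]

theorem Bop_eq {H₀ V P : 𝓗 →L[ℂ] 𝓗} (hV : IsSelfAdjoint V) (hP : IsSelfAdjoint P)
    (k ε : ℝ) :
    Bop H₀ V P k ε = (2 * Complex.I)⁻¹ •
      (Fop H₀ P k ε * V * P - P * V * Fop H₀ P k ε) := by
  rw [Bop, ← ContinuousLinearMap.star_eq_adjoint, star_mul, star_mul, hP.star_eq,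
    hV.star_eq, (isSelfAdjoint_Fop hP k ε).star_eq, ← mul_assoc]

end Operators

theorem commutator_gain_positivity_general {𝓗 : Type*} [NormedAddCommGroup 𝓗]
    [InnerProductSpace ℂ 𝓗] [CompleteSpace 𝓗]
    (H₀ V P : 𝓗 →L[ℂ] 𝓗) (hV : IsSelfAdjoint V)
    (hPsa : IsSelfAdjoint P) (hPidem : P * P = P)
    (k ε l : ℝ)
    (heig : H₀ * P = (k : ℂ) • P) (heig' : P * H₀ = (k : ℂ) • P)
    (Hl : 𝓗 →L[ℂ] 𝓗) (hHl : Hl = H₀ + (l : ℂ) • V)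
    (Com : 𝓗 →L[ℂ] 𝓗)
    (hCom : Com = Complex.I • ((l : ℂ) • (Hl * Bop H₀ V P k ε - Bop H₀ V P k ε * Hl))) :
    P * Com * P = ((l ^ 2 : ℝ) : ℂ) • (P * V * Fop H₀ P k ε * V * P) ∧
    ∀ c₂ : ℝ,
      (∀ u : 𝓗, (c₂ / ε) * ‖P u‖ ^ 2 ≤ (⟪u, (P * V * Fop H₀ P k ε * V * P) u⟫_ℂ).re) →
      ∀ u : 𝓗, (c₂ * l ^ 2 / ε) * ‖P u‖ ^ 2 ≤ (⟪u, (P * Com * P) u⟫_ℂ).re := by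
  have hPF := mul_Fop_eq_zero H₀ hPidem k ε
  have hFP := Fop_mul_eq_zero H₀ hPidem k ε
  obtain ⟨hPHF, hFHP⟩ := mul_perturbation_mul_eq hPF hFP heig heig' hHl
  have hcompress : P * Com * P = ((l ^ 2 : ℝ) : ℂ) • (P * V * Fop H₀ P k ε * V * P) := by
    rw [hCom, mul_smul_comm, smul_mul_assoc, mul_smul_comm, smul_mul_assoc, Bop_eq hV hPsa,
      compress_smul_commutator hPidem hPF hFP, hPHF, hFHP]
    simp only [smul_mul_assoc, mul_smul_comm, mul_assoc, smul_smul, ← add_smul]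
    congr 1
    field_simp
    push_cast
    ring
  refine ⟨hcompress, fun c₂ hFermi u => ?_⟩
  calc c₂ * l ^ 2 / ε * ‖P u‖ ^ 2 = l ^ 2 * (c₂ / ε * ‖P u‖ ^ 2) := by ring
    _ ≤ l ^ 2 * (⟪u, (P * V * Fop H₀ P k ε * V * P) u⟫_ℂ).re := by gcongr; exact hFermi u
    _ = (⟪u, (P * Com * P) u⟫_ℂ).re := by
      rw [hcompress, smul_apply, inner_smul_right, Complex.re_ofReal_mul]

/-- `P [H_λ, iλB_ε] P = λ² P V F_ε V P`; consequently, under the Fermi golden rule bound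
`P V F_ε V P ≥ (c₂/ε) P`, one has `P [H_λ, iλB_ε] P ≥ (c₂ λ²/ε) P`. -/
theorem commutator_gain_positivity {𝓗 : Type*} [NormedAddCommGroup 𝓗]
    [InnerProductSpace ℂ 𝓗] [CompleteSpace 𝓗]
    (H₀ V P : 𝓗 →L[ℂ] 𝓗) (hH₀ : IsSelfAdjoint H₀) (hV : IsSelfAdjoint V)
    (hPsa : IsSelfAdjoint P) (hPidem : P * P = P)
    (k ε l : ℝ) (hε : 0 < ε)
    (heig : H₀ * P = (k : ℂ) • P) (heig' : P * H₀ = (k : ℂ) • P)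
    (Hl : 𝓗 →L[ℂ] 𝓗) (hHl : Hl = H₀ + (l : ℂ) • V)
    (Com : 𝓗 →L[ℂ] 𝓗)
    (hCom : Com = Complex.I • ((l : ℂ) • (Hl * Bop H₀ V P k ε - Bop H₀ V P k ε * Hl))) :
    P * Com * P = ((l ^ 2 : ℝ) : ℂ) • (P * V * Fop H₀ P k ε * V * P) ∧
    ∀ c₂ : ℝ,
      (∀ u : 𝓗, (c₂ / ε) * ‖P u‖ ^ 2 ≤ (⟪u, (P * V * Fop H₀ P k ε * V * P) u⟫_ℂ).re) →
      ∀ u : 𝓗, (c₂ * l ^ 2 / ε) * ‖P u‖ ^ 2 ≤ (⟪u, (P * Com * P) u⟫_ℂ).re :=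
  commutator_gain_positivity_general H₀ V P hV hPsa hPidem k ε l heig heig' Hl hHl Com hCom
end

section
/- Let Δ̄ be a self-adjoint operator with no eigenvalues in an open interval J₀ and K a compact operator. Then ‖E_J(Δ̄) K E_J(Δ̄)‖ → 0 as the interval J shrinks to a point k ∈ J₀, where E_J is the spectral measure. Consequently, if E_J₀(Δ̄)[Δ̄, iS]E_J₀(Δ̄) ≥ a E_J₀(Δ̄) + E_J₀(Δ̄) K E_J₀(Δ̄) with a > 0, then for every 0 < c < a there is a subinterval J ∋ k with E_J(Δ̄)[Δ̄, iS]E_J(Δ̄) ≥ c E_J(Δ̄). -/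
/-!
The vectors fixed by every `E (k - r, k + r)`, `r > 0`, form a `Δ`-invariant subspace on which
`|μ - k| ‖x‖ ≤ ‖(Δ - μ) x‖` for all real `μ`; for the symmetric `Δ - k` this forces `Δ x = k x`,
so the subspace is trivial when `k` is not an eigenvalue. The decreasing projections
`E (k - r, k + r)` converge strongly to a vector of that subspace, hence to `0`. A strongly null
family of contractions converges uniformly on the totally bounded set `K (closedBall 0 1)`, so
`‖E_J K E_J‖ → 0`; once this norm is below `γ - c`, the compact error in the Mourre estimate
costs at most `(γ - c) ‖u‖²` on `Ran E_J`.
-/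

open scoped InnerProductSpace Topology

/-- An abstract (projection-valued) spectral measure for the self-adjoint operator `A`:
a family of commuting orthogonal projections `E J`, multiplicative on intersections,
totalizing to `1`, commuting with `A`, and localizing `A` on the range of `E J`. -/
structure SpectralMeasure {𝓗 : Type*} [NormedAddCommGroup 𝓗] [InnerProductSpace ℂ 𝓗]
    [CompleteSpace 𝓗] (A : 𝓗 →L[ℂ] 𝓗) where
  E : Set ℝ → 𝓗 →L[ℂ] 𝓗
  selfadj : ∀ J, IsSelfAdjoint (E J)
  inter : ∀ J J', E (J ∩ J') = E J * E J'
  total : E Set.univ = 1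
  comm : ∀ J, A * E J = E J * A
  loc : ∀ (J : Set ℝ) (u : 𝓗), E J u = u →
    ∀ μ : ℝ, Metric.infDist μ J * ‖u‖ ≤ ‖A u - (μ : ℂ) • u‖

open Filter Metric Set RCLike

lemma eq_zero_of_forall_mul_le {c C : ℝ} (h : ∀ t : ℝ, t * c ≤ C) : c = 0 := by
  by_contra hc
  have := h ((C + 1) / c)
  rw [div_mul_cancel₀ _ hc] at this
  linarith

section InnerProduct

variable {𝕜 E : Type*} [RCLike 𝕜] [NormedAddCommGroup E] [InnerProductSpace 𝕜 E]

lemma re_inner_eq_zero_of_forall_abs_mul_norm_le {x y : E}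
    (h : ∀ t : ℝ, |t| * ‖x‖ ≤ ‖y - (t : 𝕜) • x‖) : re ⟪y, x⟫_𝕜 = 0 := by
  refine eq_zero_of_forall_mul_le (C := ‖y‖ ^ 2 / 2) fun t => ?_
  have hsq := pow_le_pow_left₀ (by positivity) (h t) 2
  rw [norm_sub_sq (𝕜 := 𝕜), inner_smul_right, re_ofReal_mul, norm_smul, norm_algebraMap',
    Real.norm_eq_abs, mul_pow] at hsq
  linarith

theorem LinearMap.IsSymmetric.apply_eq_zero_of_forall_abs_mul_norm_le {B : E →ₗ[𝕜] E}
    (hB : B.IsSymmetric) {S : Submodule 𝕜 E} (hS : ∀ x ∈ S, B x ∈ S)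
    (h : ∀ x ∈ S, ∀ t : ℝ, |t| * ‖x‖ ≤ ‖B x - (t : 𝕜) • x‖) {x : E} (hx : x ∈ S) :
    B x = 0 := by
  have hres : B.restrict hS = 0 := by
    refine (hB.restrict_invariant hS).inner_map_self_eq_zero.mp fun y => ?_
    rw [← (hB.restrict_invariant hS).coe_re_inner_apply_self]
    change (re ⟪B y, y⟫_𝕜 : 𝕜) = 0
    rw [re_inner_eq_zero_of_forall_abs_mul_norm_le fun t => h y y.2 t, ofReal_zero]
  simpa using congr_arg Subtype.val (LinearMap.congr_fun hres ⟨x, hx⟩)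

theorem exists_tendsto_of_antitone_isStarProjection [CompleteSpace E] {P : ℕ → E →L[𝕜] E}
    (hP : ∀ n, IsStarProjection (P n)) (hanti : ∀ m n, m ≤ n → P m * P n = P n) (x : E) :
    ∃ v, Tendsto (fun n => P n x) atTop (𝓝 v) ∧ ∀ n, P n v = v := by
  have hanti' : ∀ m n, m ≤ n → P n * P m = P n := fun m n hmn => by
    simpa [(hP m).isSelfAdjoint.star_eq, (hP n).isSelfAdjoint.star_eq] using
      congr_arg star (hanti m n hmn)
  -- the complementary projections `1 - P n` increase, so the monotone-limit theorem applies
  set U : ℕ → Submodule 𝕜 E := fun n => ((1 - P n : E →L[𝕜] E) : E →ₗ[𝕜] E).range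
  have hUproj : ∀ n, ∃ _ : (U n).HasOrthogonalProjection, 1 - P n = (U n).starProjection :=
    fun n => isStarProjection_iff_eq_starProjection_range.mp (hP n).one_sub
  have : ∀ n, (U n).HasOrthogonalProjection := fun n => (hUproj n).1
  have hmono : Monotone U := by
    intro m n hmn y ⟨z, hz⟩
    have h : (1 - P n) * (1 - P m) = 1 - P m := by
      simp [sub_mul, mul_sub, hanti' m n hmn]
    exact ⟨(1 - P m) z, hz ▸ DFunLike.congr_fun h z⟩
  have hlim := Submodule.starProjection_tendsto_closure_iSup U hmono x
  set w := (⨆ n, U n).topologicalClosure.starProjection x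
  have hlim' : Tendsto (fun n => P n x) atTop (𝓝 (x - w)) := by
    refine ((tendsto_const_nhds (x := x)).sub hlim).congr fun n => ?_
    obtain ⟨_, h⟩ := hUproj n
    rw [← h]
    simp
  refine ⟨x - w, hlim', fun m => tendsto_nhds_unique ((P m).continuous.tendsto _ |>.comp hlim') ?_⟩
  refine hlim'.congr' (eventually_atTop.2 ⟨m, fun n hmn => ?_⟩)
  exact (DFunLike.congr_fun (hanti m n hmn) x).symm

end InnerProduct

section CompactOperator

variable {ι 𝕜 E F G : Type*} [RCLike 𝕜] [NormedAddCommGroup E] [NormedSpace 𝕜 E]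
  [NormedAddCommGroup F] [NormedSpace 𝕜 F] [NormedAddCommGroup G] [NormedSpace 𝕜 G]
  {l : Filter ι} {P : ι → E →L[𝕜] F}

theorem tendstoUniformlyOn_zero_of_totallyBounded (hP : ∀ i, ‖P i‖ ≤ 1)
    (hPx : ∀ x, Tendsto (fun i => P i x) l (𝓝 0)) {S : Set E} (hS : TotallyBounded S) :
    TendstoUniformlyOn (fun i => P i) 0 l S := by
  refine Metric.tendstoUniformlyOn_iff.2 fun ε hε => ?_
  obtain ⟨t, ht, hSt⟩ := Metric.totallyBounded_iff.1 hS (ε / 2) (half_pos hε)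
  filter_upwards [(eventually_all_finite ht).2 fun y _ =>
    (hPx y).eventually (ball_mem_nhds 0 (half_pos hε))] with i hi x hx
  obtain ⟨y, hy, hxy⟩ := mem_iUnion₂.1 (hSt hx)
  have hPy : ‖P i y‖ < ε / 2 := mem_ball_zero_iff.1 (hi y hy)
  calc dist 0 (P i x) = ‖P i (x - y) + P i y‖ := by simp
    _ ≤ ‖x - y‖ + ‖P i y‖ := by
        refine (norm_add_le _ _).trans ?_
        gcongr
        simpa using (P i).le_of_opNorm_le (hP i) (x - y)
    _ < ε / 2 + ε / 2 := add_lt_add (mem_ball_iff_norm.1 hxy) hPy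
    _ = ε := add_halves ε

theorem tendsto_norm_comp_of_isCompactOperator (hP : ∀ i, ‖P i‖ ≤ 1)
    (hPx : ∀ x, Tendsto (fun i => P i x) l (𝓝 0)) {K : G →L[𝕜] E} (hK : IsCompactOperator K) :
    Tendsto (fun i => ‖(P i).comp K‖) l (𝓝 0) := by
  have hS : TotallyBounded (K '' closedBall 0 1) :=
    (hK.isCompact_closure_image_closedBall 1).totallyBounded.subset subset_closure
  refine Metric.tendsto_nhds.2 fun ε hε => ?_
  filter_upwards [Metric.tendstoUniformlyOn_iff.1
    (tendstoUniformlyOn_zero_of_totallyBounded hP hPx hS) (ε / 2) (half_pos hε)] with i hi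
  have hnorm : ‖(P i).comp K‖ ≤ ε / 2 :=
    ContinuousLinearMap.opNorm_le_of_unit_norm (half_pos hε).le fun x hx => by
      simpa using (hi (K x) ⟨x, by simp [hx], rfl⟩).le
  rw [dist_zero_right, norm_norm]
  linarith

end CompactOperator

theorem Monotone.tendsto_nhdsGT_of_tendsto_comp {ι α β : Type*} [LinearOrder α]
    [TopologicalSpace α] [OrderTopology α] [ConditionallyCompleteLinearOrder β]
    [TopologicalSpace β] [OrderTopology β] {f : α → β} (hf : Monotone f) {l : Filter ι}
    [l.NeBot] {a : α} {u : ι → α} (hu : Tendsto u l (𝓝[>] a)) {L : β}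
    (h : Tendsto (f ∘ u) l (𝓝 L)) : Tendsto f (𝓝[>] a) (𝓝 L) := by
  have hlim := hf.tendsto_nhdsGT a
  rwa [tendsto_nhds_unique (hlim.comp hu) h] at hlim

namespace SpectralMeasure

variable {𝓗 : Type*} [NormedAddCommGroup 𝓗] [InnerProductSpace ℂ 𝓗] [CompleteSpace 𝓗]
  {Δ : 𝓗 →L[ℂ] 𝓗} (SM : SpectralMeasure Δ)

lemma isStarProjection (J : Set ℝ) : IsStarProjection (SM.E J) :=
  ⟨by rw [IsIdempotentElem, ← SM.inter, inter_self], SM.selfadj J⟩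

lemma mul_eq_right_of_subset {J J' : Set ℝ} (h : J ⊆ J') : SM.E J' * SM.E J = SM.E J := by
  rw [← SM.inter, inter_eq_right.2 h]

lemma mul_eq_left_of_subset {J J' : Set ℝ} (h : J ⊆ J') : SM.E J * SM.E J' = SM.E J := by
  rw [← SM.inter, inter_eq_left.2 h]

lemma norm_le_one (J : Set ℝ) : ‖SM.E J‖ ≤ 1 :=
  (SM.isStarProjection J).norm_le

lemma norm_apply_mono {J J' : Set ℝ} (h : J ⊆ J') (x : 𝓗) : ‖SM.E J x‖ ≤ ‖SM.E J' x‖ := by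
  rw [← SM.mul_eq_left_of_subset h]
  simpa using (SM.E J).le_of_opNorm_le (SM.norm_le_one J) (SM.E J' x)

lemma sub_mul_norm_le_of_apply_eq_self {k r : ℝ} (hr : 0 < r) {x : 𝓗}
    (hx : SM.E (ball k r) x = x) (μ : ℝ) : (|μ - k| - r) * ‖x‖ ≤ ‖Δ x - (μ : ℂ) • x‖ := by
  have hdist : |μ - k| - r ≤ infDist μ (ball k r) := by
    refine (le_infDist (nonempty_ball.2 hr)).2 fun y hy => ?_
    rw [← Real.dist_eq]
    linarith [dist_triangle μ y k, mem_ball.1 hy]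
  exact (mul_le_mul_of_nonneg_right hdist (norm_nonneg x)).trans (SM.loc _ x hx μ)

lemma abs_sub_mul_norm_le {k : ℝ} {x : 𝓗} (hx : ∀ r > 0, SM.E (ball k r) x = x) (μ : ℝ) :
    |μ - k| * ‖x‖ ≤ ‖Δ x - (μ : ℂ) • x‖ := by
  have hcont : Continuous fun r : ℝ => (|μ - k| - r) * ‖x‖ := by fun_prop
  have hlim : Tendsto (fun r => (|μ - k| - r) * ‖x‖) (𝓝[>] 0) (𝓝 (|μ - k| * ‖x‖)) :=
    tendsto_nhdsWithin_of_tendsto_nhds <| by simpa using hcont.tendsto 0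
  exact le_of_tendsto hlim <| eventually_nhdsWithin_of_forall fun r hr =>
    SM.sub_mul_norm_le_of_apply_eq_self hr (hx r hr) μ

theorem eq_zero_of_forall_ball_apply_eq_self (hΔ : IsSelfAdjoint Δ) {k : ℝ}
    (hk : ∀ u : 𝓗, Δ u = (k : ℂ) • u → u = 0) {x : 𝓗}
    (hx : ∀ r > 0, SM.E (ball k r) x = x) : x = 0 := by
  let S : Submodule ℂ 𝓗 := ⨅ r > 0, LinearMap.eqLocus (SM.E (ball k r) : 𝓗 →ₗ[ℂ] 𝓗) .id
  have hmem : ∀ y, y ∈ S ↔ ∀ r > 0, SM.E (ball k r) y = y := by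
    simp [S, Submodule.mem_iInf, LinearMap.mem_eqLocus]
  let B : 𝓗 →ₗ[ℂ] 𝓗 := (Δ : 𝓗 →ₗ[ℂ] 𝓗) - (k : ℂ) • LinearMap.id
  have hB : B.IsSymmetric :=
    hΔ.isSymmetric.sub (LinearMap.IsSymmetric.id.smul (Complex.conj_ofReal k))
  have hBS : ∀ y ∈ S, B y ∈ S := by
    intro y hy
    rw [hmem] at hy ⊢
    intro r hr
    have hc : Δ (SM.E (ball k r) y) = SM.E (ball k r) (Δ y) :=
      DFunLike.congr_fun (SM.comm (ball k r)) y
    simp [B, ← hc, hy r hr]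
  have hBt : ∀ y ∈ S, ∀ t : ℝ, |t| * ‖y‖ ≤ ‖B y - (t : ℂ) • y‖ := by
    intro y hy t
    have := SM.abs_sub_mul_norm_le ((hmem y).1 hy) (k + t)
    simpa [B, add_smul, sub_sub] using this
  exact hk x (sub_eq_zero.1 (hB.apply_eq_zero_of_forall_abs_mul_norm_le hBS hBt ((hmem x).2 hx)))

theorem tendsto_ball_apply_nhdsGT_zero (hΔ : IsSelfAdjoint Δ) {k : ℝ}
    (hk : ∀ u : 𝓗, Δ u = (k : ℂ) • u → u = 0) (w : 𝓗) :
    Tendsto (fun r => SM.E (ball k r) w) (𝓝[>] 0) (𝓝 0) := by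
  set u : ℕ → ℝ := fun n => 1 / (n + 1)
  have hu : Tendsto u atTop (𝓝[>] 0) := tendsto_nhdsWithin_iff.2
    ⟨tendsto_one_div_add_atTop_nhds_zero_nat,
      .of_forall fun n => (Nat.one_div_pos_of_nat : (0 : ℝ) < 1 / (n + 1))⟩
  obtain ⟨v, hv, hfix⟩ := exists_tendsto_of_antitone_isStarProjection
    (fun n => SM.isStarProjection (ball k (u n)))
    (fun m n h => SM.mul_eq_right_of_subset (ball_subset_ball (Nat.one_div_le_one_div h))) w
  have hv0 : v = 0 := SM.eq_zero_of_forall_ball_apply_eq_self hΔ hk fun r hr => by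
    obtain ⟨n, hn⟩ := exists_nat_one_div_lt hr
    rw [← hfix n]
    exact DFunLike.congr_fun (SM.mul_eq_right_of_subset (ball_subset_ball hn.le)) v
  rw [hv0, tendsto_zero_iff_norm_tendsto_zero] at hv
  rw [tendsto_zero_iff_norm_tendsto_zero]
  exact Monotone.tendsto_nhdsGT_of_tendsto_comp
    (fun r s h => SM.norm_apply_mono (ball_subset_ball h) w) hu hv

theorem tendsto_norm_ball_mul_mul_nhdsGT_zero (hΔ : IsSelfAdjoint Δ) {k : ℝ}
    (hk : ∀ u : 𝓗, Δ u = (k : ℂ) • u → u = 0) {K : 𝓗 →L[ℂ] 𝓗} (hK : IsCompactOperator K) :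
    Tendsto (fun r => ‖SM.E (ball k r) * K * SM.E (ball k r)‖) (𝓝[>] 0) (𝓝 0) :=
  squeeze_zero (fun _ => norm_nonneg _)
    (fun _ => (norm_mul_le _ _).trans (mul_le_of_le_one_right (norm_nonneg _) (SM.norm_le_one _)))
    (tendsto_norm_comp_of_isCompactOperator (fun _ => SM.norm_le_one _)
      (SM.tendsto_ball_apply_nhdsGT_zero hΔ hk) hK)

theorem le_re_inner_of_norm_mul_mul_le {T K : 𝓗 →L[ℂ] 𝓗} {J J₀ : Set ℝ} (hJ : J ⊆ J₀)
    {γ c : ℝ}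
    (hMourre : ∀ u : 𝓗, SM.E J₀ u = u → γ * ‖u‖ ^ 2 + (⟪u, K u⟫_ℂ).re ≤ (⟪u, T u⟫_ℂ).re)
    (hK : ‖SM.E J * K * SM.E J‖ ≤ γ - c) {u : 𝓗} (hu : SM.E J u = u) :
    c * ‖u‖ ^ 2 ≤ (⟪u, T u⟫_ℂ).re := by
  have hKu : ⟪u, K u⟫_ℂ = ⟪u, (SM.E J * K * SM.E J) u⟫_ℂ := by
    have h := (SM.selfadj J).isSymmetric u (K u)
    simp only [ContinuousLinearMap.coe_coe, hu] at h
    change _ = ⟪u, SM.E J (K (SM.E J u))⟫_ℂ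
    rw [hu, h]
  have hKbound : -((γ - c) * ‖u‖ ^ 2) ≤ (⟪u, K u⟫_ℂ).re := by
    rw [hKu, neg_le]
    calc -(⟪u, (SM.E J * K * SM.E J) u⟫_ℂ).re ≤ ‖⟪u, (SM.E J * K * SM.E J) u⟫_ℂ‖ :=
          (neg_le_abs _).trans (Complex.abs_re_le_norm _)
      _ ≤ ‖u‖ * ((γ - c) * ‖u‖) := (norm_inner_le_norm _ _).trans <| by
          gcongr
          exact (SM.E J * K * SM.E J).le_of_opNorm_le hK u
      _ = (γ - c) * ‖u‖ ^ 2 := by ring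
  have hu₀ : SM.E J₀ u = u := by
    rw [← hu]
    exact DFunLike.congr_fun (SM.mul_eq_right_of_subset hJ) u
  linarith [hMourre u hu₀]

end SpectralMeasure

theorem shrink_interval_kills_compact_error_general {𝓗 : Type*} [NormedAddCommGroup 𝓗]
    [InnerProductSpace ℂ 𝓗] [CompleteSpace 𝓗]
    (Δ : 𝓗 →L[ℂ] 𝓗) (hΔ : IsSelfAdjoint Δ) (SM : SpectralMeasure Δ)
    (a b k : ℝ) (hk : k ∈ Set.Ioo a b)
    (hnoeig : ∀ μ ∈ Set.Ioo a b, ∀ u : 𝓗, Δ u = (μ : ℂ) • u → u = 0)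
    (K : 𝓗 →L[ℂ] 𝓗) (hK : IsCompactOperator (K : 𝓗 →ₗ[ℂ] 𝓗))
    (T : 𝓗 →L[ℂ] 𝓗) (γ : ℝ)
    (hMourre : ∀ u : 𝓗, SM.E (Set.Ioo a b) u = u →
      γ * ‖u‖ ^ 2 + (⟪u, K u⟫_ℂ).re ≤ (⟪u, T u⟫_ℂ).re) :
    (∀ δ : ℕ → ℝ, (∀ n, 0 < δ n) → Filter.Tendsto δ Filter.atTop (𝓝 0) →
      Filter.Tendsto
        (fun n => ‖SM.E (Set.Ioo (k - δ n) (k + δ n)) * K *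
          SM.E (Set.Ioo (k - δ n) (k + δ n))‖) Filter.atTop (𝓝 0)) ∧
    ∀ c : ℝ, 0 < c → c < γ → ∃ a' b' : ℝ, a ≤ a' ∧ b' ≤ b ∧ k ∈ Set.Ioo a' b' ∧
      ∀ u : 𝓗, SM.E (Set.Ioo a' b') u = u → c * ‖u‖ ^ 2 ≤ (⟪u, T u⟫_ℂ).re := by
  have hlim := SM.tendsto_norm_ball_mul_mul_nhdsGT_zero hΔ (hnoeig k hk) hK
  simp only [Real.ball_eq_Ioo] at hlim
  refine ⟨fun δ hδ hδ0 => hlim.comp (tendsto_nhdsWithin_iff.2 ⟨hδ0, .of_forall hδ⟩),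
    fun c _ hcγ => ?_⟩
  obtain ⟨r, hrK, hr, hrab⟩ := ((hlim.eventually (ge_mem_nhds (sub_pos.2 hcγ))).and
    (Ioo_mem_nhdsGT (lt_min (sub_pos.2 hk.1) (sub_pos.2 hk.2)))).exists
  have hra : r < k - a := hrab.trans_le (min_le_left _ _)
  have hrb : r < b - k := hrab.trans_le (min_le_right _ _)
  refine ⟨k - r, k + r, by linarith, by linarith, ⟨by linarith, by linarith⟩, fun u hu => ?_⟩
  exact SM.le_re_inner_of_norm_mul_mul_le
    (Ioo_subset_Ioo (by linarith) (by linarith)) hMourre hrK hu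

/-- If `Δ̄` has no eigenvalue in the open interval `(a, b) ∋ k` and `K` is compact, then
`‖E_J K E_J‖ → 0` as the interval `J` shrinks to `k`; consequently a Mourre estimate
with compact error `E_{(a,b)} T E_{(a,b)} ≥ γ E_{(a,b)} + E_{(a,b)} K E_{(a,b)}` upgrades,
on a small enough subinterval `J ∋ k`, to a strict estimate `E_J T E_J ≥ c E_J` for any
`0 < c < γ`. -/
theorem shrink_interval_kills_compact_error {𝓗 : Type*} [NormedAddCommGroup 𝓗]
    [InnerProductSpace ℂ 𝓗] [CompleteSpace 𝓗]
    (Δ : 𝓗 →L[ℂ] 𝓗) (hΔ : IsSelfAdjoint Δ) (SM : SpectralMeasure Δ)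
    (a b k : ℝ) (hk : k ∈ Set.Ioo a b)
    (hnoeig : ∀ μ ∈ Set.Ioo a b, ∀ u : 𝓗, Δ u = (μ : ℂ) • u → u = 0)
    (K : 𝓗 →L[ℂ] 𝓗) (hK : IsCompactOperator (K : 𝓗 →ₗ[ℂ] 𝓗))
    (T : 𝓗 →L[ℂ] 𝓗) (hT : IsSelfAdjoint T) (γ : ℝ) (hγ : 0 < γ)
    (hMourre : ∀ u : 𝓗, SM.E (Set.Ioo a b) u = u →
      γ * ‖u‖ ^ 2 + (⟪u, K u⟫_ℂ).re ≤ (⟪u, T u⟫_ℂ).re) :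
    (∀ δ : ℕ → ℝ, (∀ n, 0 < δ n) → Filter.Tendsto δ Filter.atTop (𝓝 0) →
      Filter.Tendsto
        (fun n => ‖SM.E (Set.Ioo (k - δ n) (k + δ n)) * K *
          SM.E (Set.Ioo (k - δ n) (k + δ n))‖) Filter.atTop (𝓝 0)) ∧
    ∀ c : ℝ, 0 < c → c < γ → ∃ a' b' : ℝ, a ≤ a' ∧ b' ≤ b ∧ k ∈ Set.Ioo a' b' ∧
      ∀ u : 𝓗, SM.E (Set.Ioo a' b') u = u → c * ‖u‖ ^ 2 ≤ (⟪u, T u⟫_ℂ).re :=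
  shrink_interval_kills_compact_error_general Δ hΔ SM a b k hk hnoeig K hK T γ hMourre
end
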